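/- arXiv:1503.02707 — 2 statements merged into one kernel-verified Lean document; each statement's English description precedes it below -/
import Mathlib

section
/- Let X be a fuzzy Riesz space. Then: (i) X is fuzzy Dedekind complete if and only if every nonempty subset of X⁺ that is directed to the right and has an upper bound has a supremum; (ii) X is fuzzy Dedekind σ-complete if and only if every increasing sequence in X⁺ that has an upper bound has a supremum. -/
/-- A fuzzy Riesz space structure on a real vector space `X`:
a fuzzy order `μ : X × X → [0,1]` compatible with the vector structure,
together with binary suprema and infima with respect to the fuzzy order. -/
structure FuzzyRiesz (X : Type*) [AddCommGroup X] [Module ℝ X] where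
  μ : X → X → ℝ
  nonneg : ∀ x y : X, 0 ≤ μ x y
  le_one : ∀ x y : X, μ x y ≤ 1
  refl : ∀ x : X, μ x x = 1
  antisymm : ∀ x y : X, 1 < μ x y + μ y x → x = y
  trans : ∀ x y z : X, min (μ x y) (μ y z) ≤ μ x z
  add_compat : ∀ x y z : X, 1/2 < μ x y → μ x y ≤ μ (x + z) (y + z)
  smul_compat : ∀ (x y : X) (c : ℝ), 0 ≤ c → 1/2 < μ x y → μ x y ≤ μ (c • x) (c • y)
  sup : X → X → X
  inf : X → X → X
  le_sup_left : ∀ x y : X, 1/2 < μ x (sup x y)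
  le_sup_right : ∀ x y : X, 1/2 < μ y (sup x y)
  sup_le : ∀ x y z : X, 1/2 < μ x z → 1/2 < μ y z → 1/2 < μ (sup x y) z
  inf_le_left : ∀ x y : X, 1/2 < μ (inf x y) x
  inf_le_right : ∀ x y : X, 1/2 < μ (inf x y) y
  le_inf : ∀ x y z : X, 1/2 < μ z x → 1/2 < μ z y → 1/2 < μ z (inf x y)

namespace FuzzyRiesz

universe v

variable {X : Type*} [AddCommGroup X] [Module ℝ X]

/-- The absolute value `|x| = x ∨ (−x)`. -/
def fabs (F : FuzzyRiesz X) (x : X) : X := F.sup x (-x)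

/-- `x` is positive: `μ(0,x) > 1/2`. -/
def Pos (F : FuzzyRiesz X) (x : X) : Prop := 1/2 < F.μ 0 x

/-- `S⁺`, the set of positive elements of `S`. -/
def posPart (F : FuzzyRiesz X) (S : Set X) : Set X := {x ∈ S | F.Pos x}

/-- `y` is an upper bound of `A`. -/
def UpperBound (F : FuzzyRiesz X) (A : Set X) (y : X) : Prop := ∀ x ∈ A, 1/2 < F.μ x y

/-- `y` is a lower bound of `A`. -/
def LowerBound (F : FuzzyRiesz X) (A : Set X) (y : X) : Prop := ∀ x ∈ A, 1/2 < F.μ y x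

/-- `z = sup A` in the fuzzy order. -/
def IsSup (F : FuzzyRiesz X) (A : Set X) (z : X) : Prop :=
  F.UpperBound A z ∧ ∀ y : X, F.UpperBound A y → 1/2 < F.μ z y

/-- `z = inf A` in the fuzzy order. -/
def IsInf (F : FuzzyRiesz X) (A : Set X) (z : X) : Prop :=
  F.LowerBound A z ∧ ∀ y : X, F.LowerBound A y → 1/2 < F.μ y z

/-- `z = inf A`, computed relative to the subset `Y` (lower bounds taken in `Y`). -/
def IsInfIn (F : FuzzyRiesz X) (Y A : Set X) (z : X) : Prop :=
  F.LowerBound A z ∧ ∀ y ∈ Y, F.LowerBound A y → 1/2 < F.μ y z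

/-- A set is fuzzy solid if `μ(|x|,|y|) > 1/2` and `y ∈ A` imply `x ∈ A`. -/
def Solid (F : FuzzyRiesz X) (A : Set X) : Prop :=
  ∀ x y : X, 1/2 < F.μ (F.fabs x) (F.fabs y) → y ∈ A → x ∈ A

/-- A fuzzy ideal: a fuzzy solid vector subspace. -/
structure IsIdeal (F : FuzzyRiesz X) (I : Set X) : Prop where
  zero_mem : (0 : X) ∈ I
  add_mem : ∀ {x y : X}, x ∈ I → y ∈ I → x + y ∈ I
  smul_mem : ∀ (c : ℝ) {x : X}, x ∈ I → c • x ∈ I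
  solid : ∀ x y : X, 1/2 < F.μ (F.fabs x) (F.fabs y) → y ∈ I → x ∈ I

/-- A fuzzy ideal of the subspace `Y` (with the restricted fuzzy order and
vector structure): a vector subspace of `Y` that is solid relative to `Y`. -/
structure IsIdealIn (F : FuzzyRiesz X) (Y I : Set X) : Prop where
  subset : I ⊆ Y
  zero_mem : (0 : X) ∈ I
  add_mem : ∀ {x y : X}, x ∈ I → y ∈ I → x + y ∈ I
  smul_mem : ∀ (c : ℝ) {x : X}, x ∈ I → c • x ∈ I
  solid : ∀ x ∈ Y, ∀ y ∈ I, 1/2 < F.μ (F.fabs x) (F.fabs y) → x ∈ I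

/-- A decreasing net. -/
def Decreasing (F : FuzzyRiesz X) {ι : Type v} [Preorder ι] (y : ι → X) : Prop :=
  ∀ a b : ι, a ≤ b → 1/2 < F.μ (y b) (y a)

/-- An increasing net. -/
def Increasing (F : FuzzyRiesz X) {ι : Type v} [Preorder ι] (x : ι → X) : Prop :=
  ∀ a b : ι, a ≤ b → 1/2 < F.μ (x a) (x b)

/-- The net `x` converges in fuzzy order to `l`: there is a net `y` over the same
index set with `μ(|x_α − l|, y_α) > 1/2` for all `α` and `y_α ↓ 0`. -/
def FuzzyOrderConv (F : FuzzyRiesz X) {ι : Type v} [Preorder ι] (x : ι → X) (l : X) : Prop :=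
  ∃ y : ι → X, (∀ a, 1/2 < F.μ (F.fabs (x a - l)) (y a)) ∧ F.Decreasing y ∧
    F.IsInf (Set.range y) 0

/-- Fuzzy order convergence relative to the subset `Y` (the dominating net lies in `Y`
and its infimum is computed in `Y`). -/
def FuzzyOrderConvIn (F : FuzzyRiesz X) (Y : Set X) {ι : Type v} [Preorder ι]
    (x : ι → X) (l : X) : Prop :=
  ∃ y : ι → X, (∀ a, y a ∈ Y) ∧ (∀ a, 1/2 < F.μ (F.fabs (x a - l)) (y a)) ∧ F.Decreasing y ∧
    F.IsInfIn Y (Set.range y) 0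

/-- `S` is fuzzy σ-order closed: closed under fuzzy order limits of sequences in `S`. -/
def SigmaOrderClosed (F : FuzzyRiesz X) (S : Set X) : Prop :=
  ∀ (x : ℕ → X) (l : X), (∀ n, x n ∈ S) → F.FuzzyOrderConv x l → l ∈ S

/-- `S` is fuzzy order closed: closed under fuzzy order limits of nets in `S`. -/
def OrderClosed (F : FuzzyRiesz X) (S : Set X) : Prop :=
  ∀ (ι : Type v) [Preorder ι] [Nonempty ι] [IsDirected ι (· ≤ ·)],
    ∀ (x : ι → X) (l : X), (∀ a, x a ∈ S) → F.FuzzyOrderConv x l → l ∈ S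

/-- `S` is fuzzy order closed in the subspace `Y`. -/
def OrderClosedIn (F : FuzzyRiesz X) (Y S : Set X) : Prop :=
  ∀ (ι : Type v) [Preorder ι] [Nonempty ι] [IsDirected ι (· ≤ ·)],
    ∀ (x : ι → X) (l : X), (∀ a, x a ∈ S) → l ∈ Y → F.FuzzyOrderConvIn Y x l → l ∈ S

/-- A fuzzy band: a fuzzy order closed fuzzy ideal. -/
def IsBand (F : FuzzyRiesz X) (B : Set X) : Prop := F.IsIdeal B ∧ OrderClosed.{v} F B

/-- A fuzzy band of the subspace `Y`. -/
def IsBandIn (F : FuzzyRiesz X) (Y B : Set X) : Prop := F.IsIdealIn Y B ∧ OrderClosedIn.{v} F Y B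

/-- The disjoint complement `A^d = {x : |x| ∧ |y| = 0 for all y ∈ A}`. -/
def dcomp (F : FuzzyRiesz X) (A : Set X) : Set X :=
  {x : X | ∀ y ∈ A, F.inf (F.fabs x) (F.fabs y) = 0}

/-- The algebraic sum of two subsets. -/
def sumSet (A B : Set X) : Set X := {z : X | ∃ a ∈ A, ∃ b ∈ B, z = a + b}

/-- `S` is fuzzy order dense in `X`. -/
def OrderDense (F : FuzzyRiesz X) (S : Set X) : Prop :=
  ∀ x : X, x ≠ 0 → F.Pos x → ∃ y ∈ S, y ≠ 0 ∧ 1/2 < F.μ y x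

/-- `S` is fuzzy order dense in the subspace `Y`. -/
def OrderDenseIn (F : FuzzyRiesz X) (Y S : Set X) : Prop :=
  ∀ x ∈ Y, x ≠ 0 → F.Pos x → ∃ y ∈ S, y ≠ 0 ∧ 1/2 < F.μ y x

/-- `x` is nonnegative: it is not the case that `μ(x,0) > 1/2`. -/
def Nonneg (F : FuzzyRiesz X) (x : X) : Prop := ¬ (1/2 < F.μ x 0)

/-- `X` is fuzzy Archimedean: for every nonzero nonnegative `x`, the set
`{λ • x : λ > 0}` has no upper bound. -/
def FuzzyArchimedean (F : FuzzyRiesz X) : Prop :=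
  ∀ x : X, x ≠ 0 → F.Nonneg x →
    ¬ ∃ y : X, F.UpperBound {z : X | ∃ c : ℝ, 0 < c ∧ z = c • x} y

/-- `X` is fuzzy Dedekind complete. -/
def DedekindComplete (F : FuzzyRiesz X) : Prop :=
  ∀ A : Set X, A.Nonempty → (∃ y, F.UpperBound A y) → ∃ z, F.IsSup A z

/-- `X` is fuzzy Dedekind σ-complete. -/
def DedekindSigmaComplete (F : FuzzyRiesz X) : Prop :=
  ∀ A : Set X, A.Nonempty → A.Countable →
    ((∃ y, F.UpperBound A y) → ∃ z, F.IsSup A z) ∧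
    ((∃ y, F.LowerBound A y) → ∃ z, F.IsInf A z)

/-- `D` is directed to the right. -/
def DirectedRight (F : FuzzyRiesz X) (D : Set X) : Prop :=
  ∀ E : Set X, E ⊆ D → E.Finite → ∃ d ∈ D, ∀ e ∈ E, 1/2 < F.μ e d

/-- `B` is a fuzzy projection band: a fuzzy band such that every `x ∈ X` decomposes
uniquely as `x = x₁ + x₂` with `x₁ ∈ B`, `x₂ ∈ B^d`. -/
def IsProjBand (F : FuzzyRiesz X) (B : Set X) : Prop :=
  IsBand.{v} F B ∧ ∀ x : X, ∃! p : X × X, p.1 ∈ B ∧ p.2 ∈ F.dcomp B ∧ x = p.1 + p.2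

/-- There is an increasing net of elements of `S`, over some nonempty directed
preordered index set, whose supremum is `l`. -/
def IncNetSup (F : FuzzyRiesz X) (S : Set X) (l : X) : Prop :=
  ∃ (ι : Type v) (r : ι → ι → Prop), Nonempty ι ∧ (∀ a, r a a) ∧
    (∀ a b c, r a b → r b c → r a c) ∧ (∀ a b, ∃ c, r a c ∧ r b c) ∧
    ∃ net : ι → X, (∀ a, net a ∈ S) ∧ (∀ a b, r a b → 1/2 < F.μ (net a) (net b)) ∧
      F.IsSup (Set.range net) l

end FuzzyRiesz

/-!
For the converse directions a bounded set `A ∋ a` is reduced to a positive one. Replacing `A` by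
its closure under finite suprema of the elements `x ∨ a` (for countable `A = {a₀, a₁, …}`, `a = a₀`:
by the partial suprema `a₀ ∨ ⋯ ∨ aₙ`) changes neither the upper bounds nor, hence, the supremum,
and yields a set directed to the right (an increasing sequence) bounded below by `a`; translation
by `-a` makes it positive. Infima are suprema of the negated set.
-/

namespace FuzzyRiesz

variable {X : Type*} [AddCommGroup X] [Module ℝ X]

def Le (F : FuzzyRiesz X) (x y : X) : Prop := 1/2 < F.μ x y

variable {F : FuzzyRiesz X} {A B : Set X} {a u x y z : X}

theorem le_refl (x : X) : F.Le x x := by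
  unfold Le; rw [F.refl]; norm_num

theorem le_trans (hxy : F.Le x y) (hyz : F.Le y z) : F.Le x z :=
  lt_of_lt_of_le (lt_min hxy hyz) (F.trans x y z)

theorem add_le_add_right (h : F.Le x y) (z : X) : F.Le (x + z) (y + z) :=
  lt_of_lt_of_le h (F.add_compat x y z h)

theorem sub_le_sub_right_iff : F.Le (x - a) (y - a) ↔ F.Le x y :=
  ⟨fun h => by simpa using add_le_add_right h a,
    fun h => by simpa only [sub_eq_add_neg] using add_le_add_right h (-a)⟩

theorem neg_le_neg (h : F.Le x y) : F.Le (-y) (-x) := by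
  simpa [add_neg_cancel_comm] using add_le_add_right h (-x + -y)

theorem neg_le_neg_iff : F.Le (-x) (-y) ↔ F.Le y x :=
  ⟨fun h => by simpa only [neg_neg] using neg_le_neg h, neg_le_neg⟩

theorem pos_sub_iff : F.Pos (y - x) ↔ F.Le x y := by
  rw [← sub_le_sub_right_iff (a := x), sub_self]; rfl

theorem isSup_congr (h : ∀ u, F.UpperBound A u ↔ F.UpperBound B u) :
    F.IsSup A z ↔ F.IsSup B z := by
  simp only [IsSup, h]

theorem upperBound_image_sub_iff :
    F.UpperBound ((· - a) '' A) (u - a) ↔ F.UpperBound A u := by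
  simp only [UpperBound, Set.forall_mem_image]
  exact forall₂_congr fun _ _ => sub_le_sub_right_iff

theorem IsSup.of_image_sub (h : F.IsSup ((· - a) '' A) z) : F.IsSup A (z + a) := by
  have hz : z = z + a - a := by abel
  rw [hz] at h
  exact ⟨upperBound_image_sub_iff.1 h.1, fun u hu =>
    sub_le_sub_right_iff.1 (h.2 _ (upperBound_image_sub_iff.2 hu))⟩

theorem DirectedRight.image_sub (h : F.DirectedRight A) (a : X) :
    F.DirectedRight ((· - a) '' A) := by
  intro E hE hEfin
  obtain ⟨d, hd, hEd⟩ := h ((· + a) '' E) (by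
    rintro _ ⟨_, he, rfl⟩
    obtain ⟨x, hx, rfl⟩ := hE he
    simpa using hx) (hEfin.image _)
  refine ⟨d - a, ⟨d, hd, rfl⟩, fun e he => ?_⟩
  have hed := (sub_le_sub_right_iff (a := a)).2 (hEd _ ⟨e, he, rfl⟩)
  rwa [add_sub_cancel_right] at hed

theorem upperBound_image_neg_iff : F.UpperBound (Neg.neg '' A) (-y) ↔ F.LowerBound A y := by
  simp only [UpperBound, LowerBound, Set.forall_mem_image]
  exact forall₂_congr fun _ _ => neg_le_neg_iff

theorem IsSup.of_image_neg (h : F.IsSup (Neg.neg '' A) z) : F.IsInf A (-z) := by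
  rw [← neg_neg z] at h
  exact ⟨upperBound_image_neg_iff.1 h.1, fun y hy =>
    neg_le_neg_iff.1 (h.2 _ (upperBound_image_neg_iff.2 hy))⟩

theorem upperBound_image_sup_iff (ha : a ∈ A) :
    F.UpperBound ((F.sup · a) '' A) u ↔ F.UpperBound A u := by
  simp only [UpperBound, Set.forall_mem_image]
  exact ⟨fun h x hx => le_trans (F.le_sup_left x a) (h hx),
    fun h x hx => F.sup_le x a u (h x hx) (h a ha)⟩

variable (F) in
inductive SupClosure (A : Set X) : Set X
  | base {x : X} : x ∈ A → SupClosure A x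
  | sup {x y : X} : SupClosure A x → SupClosure A y → SupClosure A (F.sup x y)

theorem upperBound_supClosure_iff : F.UpperBound (F.SupClosure A) u ↔ F.UpperBound A u := by
  refine ⟨fun h x hx => h x (.base hx), fun h x hx => ?_⟩
  induction hx with
  | base hx => exact h _ hx
  | sup _ _ ihx ihy => exact F.sup_le _ _ _ ihx ihy

theorem LowerBound.supClosure (h : F.LowerBound A a) : F.LowerBound (F.SupClosure A) a := by
  intro x hx
  induction hx with
  | base hx => exact h _ hx
  | sup _ _ ihx _ => exact le_trans ihx (F.le_sup_left _ _)

theorem directedRight_supClosure (hA : A.Nonempty) : F.DirectedRight (F.SupClosure A) := by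
  intro E hE hEfin
  induction E, hEfin using Set.Finite.induction_on with
  | empty =>
    obtain ⟨a, ha⟩ := hA
    exact ⟨a, .base ha, by simp⟩
  | @insert e E _ _ ih =>
    obtain ⟨d, hd, hEd⟩ := ih ((Set.subset_insert e E).trans hE)
    refine ⟨F.sup e d, .sup (hE (Set.mem_insert e E)) hd, ?_⟩
    rintro x (rfl | hx)
    · exact F.le_sup_left _ _
    · exact le_trans (hEd x hx) (F.le_sup_right _ _)

theorem dedekindComplete_of_directedRight_pos
    (h : ∀ D : Set X, D.Nonempty → D ⊆ {x : X | F.Pos x} → F.DirectedRight D →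
      (∃ y, F.UpperBound D y) → ∃ z, F.IsSup D z) :
    F.DedekindComplete := by
  rintro A ⟨a, ha⟩ ⟨u, hu⟩
  set S := F.SupClosure ((F.sup · a) '' A)
  have hS_ub : ∀ v, F.UpperBound S v ↔ F.UpperBound A v := fun v =>
    upperBound_supClosure_iff.trans (upperBound_image_sup_iff ha)
  have hS_ge : F.LowerBound S a :=
    LowerBound.supClosure (by rintro _ ⟨x, -, rfl⟩; exact F.le_sup_right x a)
  have hS_ne : S.Nonempty := ⟨_, .base ⟨a, ha, rfl⟩⟩
  obtain ⟨z, hz⟩ := h ((· - a) '' S) (hS_ne.image _)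
    (by rintro _ ⟨s, hs, rfl⟩; exact pos_sub_iff.2 (hS_ge s hs))
    ((directedRight_supClosure (Set.Nonempty.image _ ⟨a, ha⟩)).image_sub a)
    ⟨u - a, upperBound_image_sub_iff.2 ((hS_ub u).2 hu)⟩
  exact ⟨z + a, (isSup_congr hS_ub).1 hz.of_image_sub⟩

variable (F) in
def partialSup (a : ℕ → X) : ℕ → X
  | 0 => a 0
  | n + 1 => F.sup (partialSup a n) (a (n + 1))

theorem increasing_partialSup (a : ℕ → X) : F.Increasing (F.partialSup a) := by
  intro m n hmn
  induction n, hmn using Nat.le_induction with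
  | base => exact le_refl _
  | succ n _ ih => exact le_trans ih (F.le_sup_left _ _)

theorem upperBound_range_partialSup_iff (a : ℕ → X) :
    F.UpperBound (Set.range (F.partialSup a)) u ↔ F.UpperBound (Set.range a) u := by
  simp only [UpperBound, Set.forall_mem_range]
  refine ⟨fun h n => ?_, fun h n => ?_⟩
  · cases n with
    | zero => exact h 0
    | succ n => exact le_trans (F.le_sup_right _ _) (h (n + 1))
  · induction n with
    | zero => exact h 0
    | succ n ih => exact F.sup_le _ _ _ ih (h (n + 1))

theorem exists_isSup_of_countable
    (h : ∀ x : ℕ → X, (∀ n, F.Pos (x n)) → F.Increasing x →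
      (∃ y, F.UpperBound (Set.range x) y) → ∃ z, F.IsSup (Set.range x) z)
    (hne : A.Nonempty) (hct : A.Countable) (hub : ∃ y, F.UpperBound A y) :
    ∃ z, F.IsSup A z := by
  obtain ⟨a, rfl⟩ := hct.exists_eq_range hne
  obtain ⟨u, hu⟩ := hub
  set b := F.partialSup a
  have hb_ub : ∀ v, F.UpperBound (Set.range b) v ↔ F.UpperBound (Set.range a) v :=
    fun v => upperBound_range_partialSup_iff a
  have hrange : Set.range (b · - a 0) = (· - a 0) '' Set.range b := Set.range_comp (· - a 0) b
  obtain ⟨z, hz⟩ := h (b · - a 0)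
    (fun n => pos_sub_iff.2 (increasing_partialSup a 0 n n.zero_le))
    (fun m n hmn => sub_le_sub_right_iff.2 (increasing_partialSup a m n hmn))
    ⟨u - a 0, hrange ▸ upperBound_image_sub_iff.2 ((hb_ub u).2 hu)⟩
  rw [hrange] at hz
  exact ⟨z + a 0, (isSup_congr hb_ub).1 hz.of_image_sub⟩

theorem dedekindSigmaComplete_of_increasing_pos
    (h : ∀ x : ℕ → X, (∀ n, F.Pos (x n)) → F.Increasing x →
      (∃ y, F.UpperBound (Set.range x) y) → ∃ z, F.IsSup (Set.range x) z) :
    F.DedekindSigmaComplete := by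
  refine fun A hne hct => ⟨exists_isSup_of_countable h hne hct, fun ⟨y, hy⟩ => ?_⟩
  obtain ⟨z, hz⟩ := exists_isSup_of_countable h (hne.image _) (hct.image _)
    ⟨-y, upperBound_image_neg_iff.2 hy⟩
  exact ⟨-z, hz.of_image_neg⟩

end FuzzyRiesz

/-- (i) `X` is fuzzy Dedekind complete iff every nonempty subset of `X⁺`
that is directed to the right and bounded above has a supremum; (ii) `X` is fuzzy
Dedekind σ-complete iff every increasing sequence in `X⁺` bounded above has a supremum. -/
theorem dedekindComplete_iff {X : Type*} [AddCommGroup X] [Module ℝ X]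
    (F : FuzzyRiesz X) :
    (F.DedekindComplete ↔
      ∀ D : Set X, D.Nonempty → D ⊆ {x : X | F.Pos x} → F.DirectedRight D →
        (∃ y, F.UpperBound D y) → ∃ z, F.IsSup D z) ∧
    (F.DedekindSigmaComplete ↔
      ∀ x : ℕ → X, (∀ n, F.Pos (x n)) → F.Increasing x →
        (∃ y, F.UpperBound (Set.range x) y) → ∃ z, F.IsSup (Set.range x) z) :=
  ⟨⟨fun h D hne _ _ hub => h D hne hub, F.dedekindComplete_of_directedRight_pos⟩,
    ⟨fun h x _ _ hub => (h _ (Set.range_nonempty x) (Set.countable_range x)).1 hub,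
      F.dedekindSigmaComplete_of_increasing_pos⟩⟩
end

section
/- Let B₁ and B₂ be two disjoint fuzzy bands of a fuzzy Dedekind complete Riesz space X (i.e., |x|∧|y| = 0 for all x∈B₁, y∈B₂). Then B₁ ⊕ B₂ = {x₁+x₂ : x₁∈B₁, x₂∈B₂} is a fuzzy band of X. -/
universe u

/-!
Everything happens in the crisp lattice `x ≤ y ↔ μ(x,y) > 1/2`. The sum of two fuzzy ideals is
a fuzzy ideal by the Riesz decomposition property. For order closedness, write a net converging
to `l`, dominated by `y ↓ 0`, as `x_i = a_i + b_i` with `a_i ∈ B₁`, `b_i ∈ B₂`. Disjointness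
gives `|a_i - a_j| ≤ |x_i - x_j| ≤ y_i + y_j`, so the supremum `l₁` of the `a_i - y_i` (which
exists by Dedekind completeness) satisfies `|a_k - l₁| ≤ y_k`. Hence `a → l₁ ∈ B₁` and
`b → l - l₁ ∈ B₂`, the latter dominated by `2y`.
-/

open Set

section LatticeOrderedGroup

variable {α : Type*} [Lattice α] [AddCommGroup α] [IsOrderedAddMonoid α]

lemma inf_add_le_inf_add_inf {p q r : α} (hp : 0 ≤ p) (hq : 0 ≤ q) (hr : 0 ≤ r) :
    p ⊓ (q + r) ≤ p ⊓ q + p ⊓ r := by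
  rw [inf_add, add_inf, add_inf]
  refine le_inf (le_inf ?_ ?_) (le_inf ?_ ?_)
  · exact inf_le_left.trans (le_add_of_nonneg_right hp)
  · exact inf_le_left.trans (le_add_of_nonneg_right hr)
  · exact inf_le_left.trans (le_add_of_nonneg_left hq)
  · exact inf_le_right

lemma abs_le_abs_add_of_inf_eq_zero {u v : α} (h : |u| ⊓ |v| = 0) : |u| ≤ |u + v| := by
  have huv : |u| ≤ |u + v| + |v| := by
    simpa using abs_add_le (u + v) (-v)
  calc |u| = |u| ⊓ (|u + v| + |v|) := (inf_eq_left.2 huv).symm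
    _ ≤ |u| ⊓ |u + v| + |u| ⊓ |v| :=
        inf_add_le_inf_add_inf (abs_nonneg u) (abs_nonneg (u + v)) (abs_nonneg v)
    _ = |u| ⊓ |u + v| := by rw [h, add_zero]
    _ ≤ |u + v| := inf_le_right

/-- Riesz decomposition, with `x₁ = (x ⊔ -p) ⊓ p`. -/
lemma exists_add_eq_abs_le_abs_le {x p q : α} (hp : 0 ≤ p) (hq : 0 ≤ q) (h : |x| ≤ p + q) :
    ∃ x₁ x₂ : α, x = x₁ + x₂ ∧ |x₁| ≤ p ∧ |x₂| ≤ q := by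
  obtain ⟨hxle, hlex⟩ := abs_le'.1 h
  refine ⟨(x ⊔ -p) ⊓ p, x - (x ⊔ -p) ⊓ p, by abel, ?_, ?_⟩
  · refine abs_le'.2 ⟨inf_le_right, neg_le.2 ?_⟩
    exact le_inf le_sup_right ((neg_nonpos.2 hp).trans hp)
  have hrest : x - (x ⊔ -p) ⊓ p = 0 ⊓ (x + p) ⊔ (x - p) := by
    rw [sub_inf, sub_sup, sub_self, sub_neg_eq_add]
  rw [hrest, abs_le']
  constructor
  · refine sup_le (inf_le_left.trans hq) ?_
    rw [sub_le_iff_le_add, add_comm]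
    exact hxle
  · refine neg_le.2 (le_sup_of_le_left (le_inf (neg_nonpos.2 hq) ?_))
    calc -q = -(p + q) + p := by abel
      _ ≤ x + p := add_le_add_left (neg_le.1 hlex) p

/-- The element is the supremum of the `a i - y i`. -/
lemma exists_abs_sub_le_of_abs_sub_le_add
    (hcomplete : ∀ S : Set α, S.Nonempty → BddAbove S → ∃ z, IsLUB S z)
    {ι : Type*} [Nonempty ι] {a y : ι → α} (h : ∀ i j, |a i - a j| ≤ y i + y j) :
    ∃ l, ∀ k, |a k - l| ≤ y k := by
  have hle : ∀ i j, a i - y i ≤ a j + y j := fun i j =>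
    calc a i - y i = (a i - a j) + (a j - y i) := by abel
      _ ≤ (y i + y j) + (a j - y i) := add_le_add ((le_abs_self _).trans (h i j)) le_rfl
      _ = a j + y j := by abel
  obtain ⟨k₀⟩ := ‹Nonempty ι›
  obtain ⟨l, hl⟩ := hcomplete (range fun i => a i - y i) (range_nonempty _)
    ⟨a k₀ + y k₀, forall_mem_range.2 fun i => hle i k₀⟩
  refine ⟨l, fun k => abs_le'.2 ⟨sub_le_comm.1 (hl.1 ⟨k, rfl⟩), ?_⟩⟩
  rw [neg_sub, sub_le_iff_le_add']
  exact hl.2 (forall_mem_range.2 fun i => hle i k)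

end LatticeOrderedGroup

lemma isGLB_range_smul_of_pos {𝕜 E ι : Type*}
    [Field 𝕜] [LinearOrder 𝕜] [IsStrictOrderedRing 𝕜]
    [AddCommGroup E] [PartialOrder E] [IsOrderedAddMonoid E] [Module 𝕜 E] [PosSMulMono 𝕜 E]
    {y : ι → E} {c : 𝕜} (hc : 0 < c) (h : IsGLB (range y) 0) : IsGLB (range (c • y)) 0 := by
  convert (OrderIso.smulRight (β := E) hc).isGLB_image'.2 h using 1
  · rw [← range_comp]
    rfl
  · exact (smul_zero c).symm

namespace FuzzyRiesz

variable {X : Type*} [AddCommGroup X] [Module ℝ X]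

/-- Its absolute value `|x|` is definitionally `F.fabs x`. -/
abbrev toLattice (F : FuzzyRiesz X) : Lattice X where
  le a b := 1/2 < F.μ a b
  le_refl a := by rw [F.refl]; norm_num
  le_trans a b c hab hbc := lt_of_lt_of_le (lt_min hab hbc) (F.trans a b c)
  le_antisymm a b hab hba := F.antisymm a b (by
    linarith [show 1/2 < F.μ a b from hab, show 1/2 < F.μ b a from hba])
  sup := F.sup
  le_sup_left := F.le_sup_left
  le_sup_right := F.le_sup_right
  sup_le := F.sup_le
  inf := F.inf
  inf_le_left := F.inf_le_left
  inf_le_right := F.inf_le_right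
  le_inf a b c hab hac := F.le_inf b c a hab hac

lemma isOrderedAddMonoid_toLattice (F : FuzzyRiesz X) :
    letI := F.toLattice; IsOrderedAddMonoid X :=
  letI := F.toLattice
  { add_le_add_left := fun a b hab c => lt_of_lt_of_le hab (F.add_compat a b c hab) }

lemma posSMulMono_toLattice (F : FuzzyRiesz X) : letI := F.toLattice; PosSMulMono ℝ X :=
  letI := F.toLattice
  ⟨fun c hc a b hab => lt_of_lt_of_le hab (F.smul_compat a b c hc hab)⟩

lemma IsIdeal.sub_mem {F : FuzzyRiesz X} {I : Set X} (hI : F.IsIdeal I) {x y : X}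
    (hx : x ∈ I) (hy : y ∈ I) : x - y ∈ I := by
  rw [sub_eq_add_neg, ← neg_one_smul ℝ y]
  exact hI.add_mem hx (hI.smul_mem (-1) hy)

lemma IsIdeal.sumSet {F : FuzzyRiesz X} {I J : Set X} (hI : F.IsIdeal I) (hJ : F.IsIdeal J) :
    F.IsIdeal (sumSet I J) := by
  let _ := F.toLattice
  have := F.isOrderedAddMonoid_toLattice
  refine ⟨⟨0, hI.zero_mem, 0, hJ.zero_mem, (add_zero 0).symm⟩, ?_, ?_, ?_⟩
  · rintro _ _ ⟨a, ha, b, hb, rfl⟩ ⟨a', ha', b', hb', rfl⟩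
    exact ⟨a + a', hI.add_mem ha ha', b + b', hJ.add_mem hb hb', add_add_add_comm a b a' b'⟩
  · rintro c _ ⟨a, ha, b, hb, rfl⟩
    exact ⟨c • a, hI.smul_mem c ha, c • b, hJ.smul_mem c hb, smul_add c a b⟩
  · rintro x _ hx ⟨a, ha, b, hb, rfl⟩
    obtain ⟨x₁, x₂, rfl, hx₁, hx₂⟩ :=
      exists_add_eq_abs_le_abs_le (abs_nonneg a) (abs_nonneg b)
        ((show |x| ≤ |a + b| from hx).trans (abs_add_le a b))
    exact ⟨x₁, hI.solid x₁ a hx₁ ha, x₂, hJ.solid x₂ b hx₂ hb, rfl⟩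

lemma orderClosed_sumSet {F : FuzzyRiesz X} (hD : F.DedekindComplete) {B₁ B₂ : Set X}
    (h₁ : IsBand.{u} F B₁) (h₂ : IsBand.{u} F B₂)
    (hdisj : ∀ x ∈ B₁, ∀ y ∈ B₂, F.inf (F.fabs x) (F.fabs y) = 0) :
    OrderClosed.{u} F (sumSet B₁ B₂) := by
  let _ := F.toLattice
  have := F.isOrderedAddMonoid_toLattice
  have := F.posSMulMono_toLattice
  intro ι _ _ _ x l hx ⟨y, hxy, hy_anti, hy_inf⟩
  choose a ha b hb hab using hx
  have hosc : ∀ i j, |a i - a j| ≤ y i + y j := fun i j =>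
    calc |a i - a j|
        ≤ |(a i - a j) + (b i - b j)| := abs_le_abs_add_of_inf_eq_zero
          (hdisj _ (h₁.1.sub_mem (ha i) (ha j)) _ (h₂.1.sub_mem (hb i) (hb j)))
      _ = |(x i - l) + (l - x j)| := by rw [hab i, hab j]; abel_nf
      _ ≤ y i + y j := (abs_add_le _ _).trans
          (add_le_add (hxy i) (abs_sub_comm l (x j) ▸ hxy j))
  obtain ⟨l₁, hl₁⟩ := exists_abs_sub_le_of_abs_sub_le_add hD hosc
  have hl₁_mem : l₁ ∈ B₁ := h₁.2 ι a l₁ ha ⟨y, hl₁, hy_anti, hy_inf⟩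
  have hb_conv : ∀ k, |b k - (l - l₁)| ≤ ((2 : ℝ) • y) k := fun k =>
    calc |b k - (l - l₁)| = |(x k - l) + -(a k - l₁)| := by rw [hab k]; abel_nf
      _ ≤ y k + y k :=
          (abs_add_le _ _).trans (add_le_add (hxy k) ((abs_neg _).trans_le (hl₁ k)))
      _ = ((2 : ℝ) • y) k := (two_smul ℝ (y k)).symm
  have hl₂_mem : l - l₁ ∈ B₂ := h₂.2 ι b (l - l₁) hb
    ⟨(2 : ℝ) • y, hb_conv,
      fun i j hij => show (2 : ℝ) • y j ≤ (2 : ℝ) • y i from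
        smul_le_smul_of_nonneg_left (hy_anti i j hij) zero_le_two,
      isGLB_range_smul_of_pos two_pos hy_inf⟩
  exact ⟨l₁, hl₁_mem, l - l₁, hl₂_mem, (add_sub_cancel l₁ l).symm⟩

end FuzzyRiesz

/-- the sum of two disjoint fuzzy bands of a fuzzy Dedekind complete
Riesz space is a fuzzy band. -/
theorem disjoint_bands_sum_isBand {X : Type*} [AddCommGroup X] [Module ℝ X]
    (F : FuzzyRiesz X) (hD : F.DedekindComplete) (B₁ B₂ : Set X)
    (h₁ : FuzzyRiesz.IsBand.{u} F B₁) (h₂ : FuzzyRiesz.IsBand.{u} F B₂)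
    (hdisj : ∀ x ∈ B₁, ∀ y ∈ B₂, F.inf (F.fabs x) (F.fabs y) = 0) :
    FuzzyRiesz.IsBand.{u} F (FuzzyRiesz.sumSet B₁ B₂) :=
  ⟨h₁.1.sumSet h₂.1, FuzzyRiesz.orderClosed_sumSet hD h₁ h₂ hdisj⟩
end
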